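/- arXiv:2005.02223 — 2 statements merged into one kernel-verified Lean document; each statement's English description precedes it below -/
import Mathlib

section
/- For the 9-dimensional quiver algebra A with relations δ² = γ³ = αβ, δγ = γδ = 0, δα = γα = 0, βδ = βγ = 0, the center Z(A) has k-basis {1, γ, γ², δ, δ², βα}; in particular dim_k Z(A) = 6. -/
/-! The 9-dimensional algebra `A` given by the quiver with vertices `i, j`, arrows
`α : i → j`, `β : j → i`, and loops `γ, δ` at `i`, with relations
`δ² = γ³ = αβ`, `δγ = γδ = 0`, `δα = γα = 0`, `βδ = βγ = 0`.
Paths compose left-to-right, so the product `x * y` means "first `x`, then `y`";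
in particular `α * β` is a loop at `i` and `β * α` is a loop at `j`.
We realise `A` as the quotient of the free algebra on the six generators
`e_i, e_j, α, β, γ, δ` by the path-algebra relations together with the quiver relations. -/

open FreeAlgebra

/-- The defining relations of the quiver algebra: generator `0` is the vertex idempotent
`e_i`, `1` is `e_j`, `2` is `α : i → j`, `3` is `β : j → i`, `4` is the loop `γ` at `i`,
and `5` is the loop `δ` at `i`. -/
inductive QuiverRel (k : Type*) [Field k] :
    FreeAlgebra k (Fin 6) → FreeAlgebra k (Fin 6) → Prop
  | idem_i : QuiverRel k (ι k 0 * ι k 0) (ι k 0)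
  | idem_j : QuiverRel k (ι k 1 * ι k 1) (ι k 1)
  | orth_ij : QuiverRel k (ι k 0 * ι k 1) 0
  | orth_ji : QuiverRel k (ι k 1 * ι k 0) 0
  | sum_idem : QuiverRel k (ι k 0 + ι k 1) 1
  | alpha_src : QuiverRel k (ι k 0 * ι k 2) (ι k 2)   -- α starts at i
  | alpha_tgt : QuiverRel k (ι k 2 * ι k 1) (ι k 2)   -- α ends at j
  | beta_src : QuiverRel k (ι k 1 * ι k 3) (ι k 3)    -- β starts at j
  | beta_tgt : QuiverRel k (ι k 3 * ι k 0) (ι k 3)    -- β ends at i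
  | gamma_src : QuiverRel k (ι k 0 * ι k 4) (ι k 4)
  | gamma_tgt : QuiverRel k (ι k 4 * ι k 0) (ι k 4)
  | delta_src : QuiverRel k (ι k 0 * ι k 5) (ι k 5)
  | delta_tgt : QuiverRel k (ι k 5 * ι k 0) (ι k 5)
  | delta_sq : QuiverRel k (ι k 5 * ι k 5) (ι k 2 * ι k 3)        -- δ² = αβ
  | gamma_cube : QuiverRel k (ι k 4 * (ι k 4 * ι k 4)) (ι k 2 * ι k 3)  -- γ³ = αβ
  | delta_gamma : QuiverRel k (ι k 5 * ι k 4) 0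
  | gamma_delta : QuiverRel k (ι k 4 * ι k 5) 0
  | delta_alpha : QuiverRel k (ι k 5 * ι k 2) 0
  | gamma_alpha : QuiverRel k (ι k 4 * ι k 2) 0
  | beta_delta : QuiverRel k (ι k 3 * ι k 5) 0
  | beta_gamma : QuiverRel k (ι k 3 * ι k 4) 0

variable (k : Type*) [Field k]

/-- The 9-dimensional quiver algebra `A`. -/
abbrev QuiverAlg := RingQuot (QuiverRel k)

/-- The vertex idempotent `i`. -/
noncomputable def qi : QuiverAlg k := RingQuot.mkAlgHom k (QuiverRel k) (ι k 0)
/-- The vertex idempotent `j`. -/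
noncomputable def qj : QuiverAlg k := RingQuot.mkAlgHom k (QuiverRel k) (ι k 1)
/-- The arrow `α : i → j`. -/
noncomputable def qα : QuiverAlg k := RingQuot.mkAlgHom k (QuiverRel k) (ι k 2)
/-- The arrow `β : j → i`. -/
noncomputable def qβ : QuiverAlg k := RingQuot.mkAlgHom k (QuiverRel k) (ι k 3)
/-- The loop `γ` at `i`. -/
noncomputable def qγ : QuiverAlg k := RingQuot.mkAlgHom k (QuiverRel k) (ι k 4)
/-- The loop `δ` at `i`. -/
noncomputable def qδ : QuiverAlg k := RingQuot.mkAlgHom k (QuiverRel k) (ι k 5)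

/-- The standard basis vector `{i, j, α, β, βα, γ, γ², δ, δ²}` of `A`. -/
noncomputable def qbasisVec : Fin 9 → QuiverAlg k :=
  ![qi k, qj k, qα k, qβ k, qβ k * qα k, qγ k, qγ k ^ 2, qδ k, qδ k ^ 2]

/-! The nine paths `i, j, α, β, βα, γ, γ², δ, δ²` span `A`: their span contains `1 = i + j` and,
by the relations, is stable under left multiplication by the generators. The left regular
representation these paths predict is an honest representation of `A` by `9 × 9` matrices (its
relations are checked over `ℕ`), and applied to the coordinate vector of `1` it sends each path to
its standard basis vector; so it reads off coordinates on `A`. In these coordinates, commuting with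
`α` and `β` forces a central element to have no `α`, `β` components and equal `i`, `j` components,
leaving the span of `1, γ, γ², δ, δ², βα`; these six are independent and commute with all
generators, hence are central. -/

open RingQuot

theorem mul_eq_zero_of_ends_orthogonal {R : Type*} [Semiring R] {x y e f : R}
    (hx : x * e = x) (hy : f * y = y) (hef : e * f = 0) : x * y = 0 :=
  calc x * y = x * (e * f) * y := by rw [mul_assoc, mul_assoc, hy, ← mul_assoc, hx]
    _ = 0 := by rw [hef, mul_zero, zero_mul]

section Generators

variable {R A : Type*} [CommSemiring R] [Semiring A] [Algebra R A] {s : Set A}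

theorem Submodule.span_range_eq_top_of_mul_mem {ι : Type*} {v : ι → A}
    (hs : Algebra.adjoin R s = ⊤) (h1 : 1 ∈ span R (Set.range v))
    (hv : ∀ a ∈ s, ∀ i, a * v i ∈ span R (Set.range v)) : span R (Set.range v) = ⊤ := by
  set S := span R (Set.range v)
  have hS : ∀ a ∈ s, ∀ x ∈ S, a * x ∈ S := fun a ha _ hx =>
    (show S ≤ S.comap (LinearMap.mulLeft R a) from
      span_le.2 (Set.range_subset_iff.2 (hv a ha))) hx
  rw [eq_top_iff]
  rintro a -
  suffices ∀ x ∈ S, a * x ∈ S by simpa using this 1 h1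
  induction (hs ▸ Algebra.mem_top : a ∈ Algebra.adjoin R s) using Algebra.adjoin_induction with
  | mem a ha => exact hS a ha
  | algebraMap r =>
    intro x hx; rw [Algebra.algebraMap_eq_smul_one, smul_one_mul]; exact S.smul_mem r hx
  | add a b _ _ ha hb => intro x hx; rw [add_mul]; exact S.add_mem (ha x hx) (hb x hx)
  | mul a b _ _ ha hb => intro x hx; rw [mul_assoc]; exact ha _ (hb x hx)

theorem Subalgebra.mem_center_of_commute (hs : Algebra.adjoin R s = ⊤) {z : A}
    (hz : ∀ a ∈ s, a * z = z * a) : z ∈ Subalgebra.center R A :=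
  Subalgebra.mem_center_iff.2 fun _ =>
    (Algebra.adjoin_le_centralizer_centralizer R s (hs ▸ Algebra.mem_top) z
      ((Subalgebra.mem_centralizer_iff R).2 hz)).symm

end Generators

namespace QuiverAlg

open Matrix Submodule

variable {k}

theorem mk_ι_mul_mk_ι {a b : Fin 6} {c : FreeAlgebra k (Fin 6)}
    (h : QuiverRel k (ι k a * ι k b) c) :
    mkAlgHom k (QuiverRel k) (ι k a) * mkAlgHom k (QuiverRel k) (ι k b) =
      mkAlgHom k (QuiverRel k) c := by
  rw [← map_mul]; exact mkAlgHom_rel k h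

theorem mk_ι_mul_mk_ι_eq_zero {a b : Fin 6} (h : QuiverRel k (ι k a * ι k b) 0) :
    mkAlgHom k (QuiverRel k) (ι k a) * mkAlgHom k (QuiverRel k) (ι k b) = 0 := by
  rw [mk_ι_mul_mk_ι h, map_zero]

variable (k)

@[simp] theorem qi_mul_qi : qi k * qi k = qi k := mk_ι_mul_mk_ι .idem_i
@[simp] theorem qj_mul_qj : qj k * qj k = qj k := mk_ι_mul_mk_ι .idem_j
@[simp] theorem qi_mul_qj : qi k * qj k = 0 := mk_ι_mul_mk_ι_eq_zero .orth_ij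
@[simp] theorem qj_mul_qi : qj k * qi k = 0 := mk_ι_mul_mk_ι_eq_zero .orth_ji
theorem qi_add_qj : qi k + qj k = 1 := by
  rw [qi, qj, ← map_add, mkAlgHom_rel k .sum_idem, map_one]
@[simp] theorem qi_mul_qα : qi k * qα k = qα k := mk_ι_mul_mk_ι .alpha_src
@[simp] theorem qα_mul_qj : qα k * qj k = qα k := mk_ι_mul_mk_ι .alpha_tgt
@[simp] theorem qj_mul_qβ : qj k * qβ k = qβ k := mk_ι_mul_mk_ι .beta_src
@[simp] theorem qβ_mul_qi : qβ k * qi k = qβ k := mk_ι_mul_mk_ι .beta_tgt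
@[simp] theorem qi_mul_qγ : qi k * qγ k = qγ k := mk_ι_mul_mk_ι .gamma_src
@[simp] theorem qγ_mul_qi : qγ k * qi k = qγ k := mk_ι_mul_mk_ι .gamma_tgt
@[simp] theorem qi_mul_qδ : qi k * qδ k = qδ k := mk_ι_mul_mk_ι .delta_src
@[simp] theorem qδ_mul_qi : qδ k * qi k = qδ k := mk_ι_mul_mk_ι .delta_tgt
@[simp] theorem qα_mul_qβ : qα k * qβ k = qδ k * qδ k := by
  rw [qα, qβ, qδ, ← map_mul, ← map_mul]; exact (mkAlgHom_rel k .delta_sq).symm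
@[simp] theorem qγ_mul_qγ_mul_qγ : qγ k * qγ k * qγ k = qδ k * qδ k := by
  rw [← qα_mul_qβ, qα, qβ, qγ, ← map_mul, ← map_mul, ← map_mul, mul_assoc]
  exact mkAlgHom_rel k .gamma_cube
@[simp] theorem qδ_mul_qγ : qδ k * qγ k = 0 := mk_ι_mul_mk_ι_eq_zero .delta_gamma
@[simp] theorem qγ_mul_qδ : qγ k * qδ k = 0 := mk_ι_mul_mk_ι_eq_zero .gamma_delta
@[simp] theorem qδ_mul_qα : qδ k * qα k = 0 := mk_ι_mul_mk_ι_eq_zero .delta_alpha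
@[simp] theorem qγ_mul_qα : qγ k * qα k = 0 := mk_ι_mul_mk_ι_eq_zero .gamma_alpha
@[simp] theorem qβ_mul_qδ : qβ k * qδ k = 0 := mk_ι_mul_mk_ι_eq_zero .beta_delta
@[simp] theorem qβ_mul_qγ : qβ k * qγ k = 0 := mk_ι_mul_mk_ι_eq_zero .beta_gamma

@[simp] theorem qα_mul_qi : qα k * qi k = 0 :=
  mul_eq_zero_of_ends_orthogonal (qα_mul_qj k) (qi_mul_qi k) (qj_mul_qi k)
@[simp] theorem qα_mul_qα : qα k * qα k = 0 :=
  mul_eq_zero_of_ends_orthogonal (qα_mul_qj k) (qi_mul_qα k) (qj_mul_qi k)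
@[simp] theorem qα_mul_qγ : qα k * qγ k = 0 :=
  mul_eq_zero_of_ends_orthogonal (qα_mul_qj k) (qi_mul_qγ k) (qj_mul_qi k)
@[simp] theorem qα_mul_qδ : qα k * qδ k = 0 :=
  mul_eq_zero_of_ends_orthogonal (qα_mul_qj k) (qi_mul_qδ k) (qj_mul_qi k)
@[simp] theorem qj_mul_qα : qj k * qα k = 0 :=
  mul_eq_zero_of_ends_orthogonal (qj_mul_qj k) (qi_mul_qα k) (qj_mul_qi k)
@[simp] theorem qj_mul_qγ : qj k * qγ k = 0 :=
  mul_eq_zero_of_ends_orthogonal (qj_mul_qj k) (qi_mul_qγ k) (qj_mul_qi k)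
@[simp] theorem qj_mul_qδ : qj k * qδ k = 0 :=
  mul_eq_zero_of_ends_orthogonal (qj_mul_qj k) (qi_mul_qδ k) (qj_mul_qi k)
@[simp] theorem qi_mul_qβ : qi k * qβ k = 0 :=
  mul_eq_zero_of_ends_orthogonal (qi_mul_qi k) (qj_mul_qβ k) (qi_mul_qj k)
@[simp] theorem qβ_mul_qj : qβ k * qj k = 0 :=
  mul_eq_zero_of_ends_orthogonal (qβ_mul_qi k) (qj_mul_qj k) (qi_mul_qj k)
@[simp] theorem qβ_mul_qβ : qβ k * qβ k = 0 :=
  mul_eq_zero_of_ends_orthogonal (qβ_mul_qi k) (qj_mul_qβ k) (qi_mul_qj k)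
@[simp] theorem qγ_mul_qj : qγ k * qj k = 0 :=
  mul_eq_zero_of_ends_orthogonal (qγ_mul_qi k) (qj_mul_qj k) (qi_mul_qj k)
@[simp] theorem qγ_mul_qβ : qγ k * qβ k = 0 :=
  mul_eq_zero_of_ends_orthogonal (qγ_mul_qi k) (qj_mul_qβ k) (qi_mul_qj k)
@[simp] theorem qδ_mul_qj : qδ k * qj k = 0 :=
  mul_eq_zero_of_ends_orthogonal (qδ_mul_qi k) (qj_mul_qj k) (qi_mul_qj k)
@[simp] theorem qδ_mul_qβ : qδ k * qβ k = 0 :=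
  mul_eq_zero_of_ends_orthogonal (qδ_mul_qi k) (qj_mul_qβ k) (qi_mul_qj k)

-- Words are simplified at their left end after `← mul_assoc` and at their right end after
-- `mul_assoc`; these are the length-three consequences that this leaves to be stated.
@[simp] theorem qδ_mul_qδ_mul_qα : qδ k * qδ k * qα k = 0 := by
  rw [mul_assoc, qδ_mul_qα, mul_zero]
@[simp] theorem qδ_mul_qδ_mul_qδ : qδ k * qδ k * qδ k = 0 := by
  rw [mul_assoc, ← qα_mul_qβ, ← mul_assoc, qδ_mul_qα, zero_mul]
@[simp] theorem qβ_mul_qδ_mul_qδ : qβ k * (qδ k * qδ k) = 0 := by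
  rw [← mul_assoc, qβ_mul_qδ, zero_mul]

noncomputable def generators : Fin 6 → QuiverAlg k := ![qi k, qj k, qα k, qβ k, qγ k, qδ k]

theorem adjoin_range_generators : Algebra.adjoin k (Set.range (generators k)) = ⊤ := by
  have : generators k = mkAlgHom k (QuiverRel k) ∘ ι k := by
    funext t; fin_cases t <;> rfl
  rw [this, Set.range_comp, ← AlgHom.map_adjoin, FreeAlgebra.adjoin_range_ι, Algebra.map_top,
    AlgHom.range_eq_top]
  exact mkAlgHom_surjective k (QuiverRel k)

theorem span_range_qbasisVec : span k (Set.range (qbasisVec k)) = ⊤ := by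
  refine Submodule.span_range_eq_top_of_mul_mem (adjoin_range_generators k) ?_ ?_
  · rw [← qi_add_qj]
    exact add_mem (subset_span ⟨0, rfl⟩) (subset_span ⟨1, rfl⟩)
  · simp only [Set.forall_mem_range, Fin.forall_fin_succ, IsEmpty.forall_iff, generators,
      qbasisVec, cons_val_zero, cons_val_succ, and_true]
    simp [sq, ← mul_assoc, mem_span_of_mem]

-- Column `y` of `generatorMatrix t` holds the coordinates of `generators k t * qbasisVec k y`.
def generatorMatrix : Fin 6 → Matrix (Fin 9) (Fin 9) ℕ
  | 0 => diagonal ![1, 0, 1, 0, 0, 1, 1, 1, 1]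
  | 1 => diagonal ![0, 1, 0, 1, 1, 0, 0, 0, 0]
  | 2 => single 2 1 1 + single 8 3 1
  | 3 => single 3 0 1 + single 4 2 1
  | 4 => single 5 0 1 + single 6 5 1 + single 8 6 1
  | 5 => single 7 0 1 + single 8 7 1

noncomputable def castMatrix : Matrix (Fin 9) (Fin 9) ℕ →+* Matrix (Fin 9) (Fin 9) k :=
  (Nat.castRingHom k).mapMatrix

noncomputable def freeRegularRep : FreeAlgebra k (Fin 6) →ₐ[k] Matrix (Fin 9) (Fin 9) k :=
  FreeAlgebra.lift k fun g => castMatrix k (generatorMatrix g)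

theorem freeRegularRep_eq_of_rel {a b : FreeAlgebra k (Fin 6)} (h : QuiverRel k a b) :
    freeRegularRep k a = freeRegularRep k b := by
  cases h <;>
    simp only [freeRegularRep, map_mul, map_add, map_one, map_zero, FreeAlgebra.lift_ι_apply] <;>
    simp only [← map_mul (castMatrix k), ← map_add (castMatrix k), ← map_one (castMatrix k),
      ← map_zero (castMatrix k)] <;>
    exact congrArg _ (by decide)

noncomputable def regularRep : QuiverAlg k →ₐ[k] Matrix (Fin 9) (Fin 9) k :=
  liftAlgHom k ⟨freeRegularRep k, fun _ _ => freeRegularRep_eq_of_rel k⟩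

def basisMatrix : Fin 9 → Matrix (Fin 9) (Fin 9) ℕ :=
  ![generatorMatrix 0, generatorMatrix 1, generatorMatrix 2, generatorMatrix 3,
    generatorMatrix 3 * generatorMatrix 2, generatorMatrix 4, generatorMatrix 4 ^ 2,
    generatorMatrix 5, generatorMatrix 5 ^ 2]

theorem regularRep_qbasisVec (m : Fin 9) :
    regularRep k (qbasisVec k m) = castMatrix k (basisMatrix m) := by
  have h (t : Fin 6) :
      regularRep k (mkAlgHom k (QuiverRel k) (ι k t)) = castMatrix k (generatorMatrix t) := by
    simp [regularRep, freeRegularRep]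
  revert m
  simp only [Fin.forall_fin_succ, IsEmpty.forall_iff, qbasisVec, basisMatrix,
    cons_val_zero, cons_val_succ, and_true, map_mul, map_pow]
  exact ⟨h 0, h 1, h 2, h 3, congrArg₂ (· * ·) (h 3) (h 2), h 4, congrArg (· ^ 2) (h 4), h 5,
    congrArg (· ^ 2) (h 5)⟩

def oneCoord : Fin 9 → ℕ := Pi.single 0 1 + Pi.single 1 1

theorem basisMatrix_mulVec_oneCoord : ∀ m, basisMatrix m *ᵥ oneCoord = Pi.single m 1 := by
  decide

-- `oneCoord` are the coordinates of `1 = qi + qj`, so `coord k a` are those of `a * 1 = a`.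
noncomputable def coord : QuiverAlg k →ₗ[k] Fin 9 → k :=
  LinearMap.applyₗ (Nat.cast ∘ oneCoord) ∘ₗ toLin'.toLinearMap ∘ₗ
    (regularRep k).toLinearMap

theorem coord_qbasisVec (m : Fin 9) : coord k (qbasisVec k m) = Pi.single m 1 := by
  ext x
  simpa [coord, regularRep_qbasisVec, castMatrix, basisMatrix_mulVec_oneCoord,
    Pi.single_apply] using
    (RingHom.map_mulVec (Nat.castRingHom k) (basisMatrix m) oneCoord x).symm

noncomputable def centerBasisVec : Fin 6 → QuiverAlg k :=
  ![1, qγ k, qγ k ^ 2, qδ k, qδ k ^ 2, qβ k * qα k]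

theorem mem_center_of_commute_generators {z : QuiverAlg k}
    (h : qi k * z = z * qi k ∧ qj k * z = z * qj k ∧ qα k * z = z * qα k ∧
      qβ k * z = z * qβ k ∧ qγ k * z = z * qγ k ∧ qδ k * z = z * qδ k) :
    z ∈ Subalgebra.center k (QuiverAlg k) := by
  refine Subalgebra.mem_center_of_commute (adjoin_range_generators k) (Set.forall_mem_range.2 ?_)
  simpa only [Fin.forall_fin_succ, IsEmpty.forall_iff, generators, cons_val_zero, cons_val_succ,
    and_true] using h

theorem qγ_mem_center : qγ k ∈ Subalgebra.center k (QuiverAlg k) :=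
  mem_center_of_commute_generators k (by simp)

theorem qδ_mem_center : qδ k ∈ Subalgebra.center k (QuiverAlg k) :=
  mem_center_of_commute_generators k (by simp)

theorem qβ_mul_qα_mem_center : qβ k * qα k ∈ Subalgebra.center k (QuiverAlg k) :=
  mem_center_of_commute_generators k <| by
    -- so that `(βα)g` is simplified through `αg`
    simp only [mul_assoc (qβ k) (qα k)]
    simp [← mul_assoc]

theorem centerBasisVec_mem_center (t : Fin 6) :
    centerBasisVec k t ∈ Subalgebra.center k (QuiverAlg k) := by
  fin_cases t
  exacts [one_mem _, qγ_mem_center k, pow_mem (qγ_mem_center k) 2, qδ_mem_center k,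
    pow_mem (qδ_mem_center k) 2, qβ_mul_qα_mem_center k]

theorem linearIndependent_centerBasisVec : LinearIndependent k (centerBasisVec k) := by
  have hv : centerBasisVec k = ![qbasisVec k 0 + qbasisVec k 1, qbasisVec k 5, qbasisVec k 6,
      qbasisVec k 7, qbasisVec k 8, qbasisVec k 4] := by
    simp [centerBasisVec, qbasisVec, qi_add_qj]
  rw [Fintype.linearIndependent_iff]
  intro d hd
  have h := congrArg (coord k) hd
  simp only [hv, Fin.sum_univ_succ, Fin.sum_univ_zero, add_zero, cons_val_zero, cons_val_succ,
    map_add, map_smul, coord_qbasisVec] at h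
  intro t
  have := congrFun h (![0, 5, 6, 7, 8, 4] t)
  fin_cases t <;> simpa using this

theorem mem_span_centerBasisVec {z : QuiverAlg k} (hz : z ∈ Subalgebra.center k (QuiverAlg k)) :
    z ∈ span k (Set.range (centerBasisVec k)) := by
  obtain ⟨c, hc⟩ :=
    (mem_span_range_iff_exists_fun k).1 (span_range_qbasisVec k ▸ mem_top (x := z))
  have hαz : qα k * z = c 1 • qbasisVec k 2 + c 3 • qbasisVec k 8 := by
    simp [← hc, Fin.sum_univ_succ, mul_add, qbasisVec, sq, ← mul_assoc]
  have hzα : z * qα k = c 0 • qbasisVec k 2 + c 3 • qbasisVec k 4 := by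
    simp [← hc, Fin.sum_univ_succ, add_mul, qbasisVec, sq, mul_assoc]
  have hβz : qβ k * z = c 0 • qbasisVec k 3 + c 2 • qbasisVec k 4 := by
    simp [← hc, Fin.sum_univ_succ, mul_add, qbasisVec, sq, ← mul_assoc]
  have hzβ : z * qβ k = c 1 • qbasisVec k 3 + c 2 • qbasisVec k 8 := by
    simp [← hc, Fin.sum_univ_succ, add_mul, qbasisVec, sq, mul_assoc]
  have hα := congrArg (coord k) ((hαz.symm.trans (Subalgebra.mem_center_iff.1 hz _)).trans hzα)
  have hβ := congrArg (coord k) ((hβz.symm.trans (Subalgebra.mem_center_iff.1 hz _)).trans hzβ)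
  simp only [map_add, map_smul, coord_qbasisVec] at hα hβ
  have hc1 : c 1 = c 0 := by simpa using congrFun hα 2
  have hc3 : c 3 = 0 := by simpa using congrFun hα 8
  have hc2 : c 2 = 0 := by simpa using congrFun hβ 4
  refine (mem_span_range_iff_exists_fun k).2 ⟨![c 0, c 5, c 6, c 7, c 8, c 4], ?_⟩
  rw [← hc]
  simp only [Fin.sum_univ_succ, Fin.sum_univ_zero, add_zero, centerBasisVec, qbasisVec,
    cons_val_zero, cons_val_succ, Fin.succ_zero_eq_one, Fin.succ_one_eq_two, Fin.reduceSucc,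
    hc1, hc2, hc3, zero_smul, zero_add, ← qi_add_qj, smul_add]
  abel

theorem exists_basis_center : ∃ b : Module.Basis (Fin 6) k (Subalgebra.center k (QuiverAlg k)),
    ∀ m, (b m : QuiverAlg k) = centerBasisVec k m := by
  let w : Fin 6 → Subalgebra.center k (QuiverAlg k) :=
    fun t => ⟨centerBasisVec k t, centerBasisVec_mem_center k t⟩
  have hli : LinearIndependent k w :=
    .of_comp (Subalgebra.center k _).val.toLinearMap (linearIndependent_centerBasisVec k)
  have hsp : ⊤ ≤ span k (Set.range w) := by
    rintro x -
    obtain ⟨d, hd⟩ := (mem_span_range_iff_exists_fun k).1 (mem_span_centerBasisVec k x.2)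
    exact (mem_span_range_iff_exists_fun k).2 ⟨d, Subtype.ext (by simpa [w] using hd)⟩
  exact ⟨.mk hli hsp, fun m => by simp [w]⟩

end QuiverAlg

/-- The centre `Z(A)` of the quiver algebra `A` has `k`-basis `{1, γ, γ², δ, δ², βα}`;
in particular `dim_k Z(A) = 6`. -/
theorem stmt_6 :
    (∃ b : Module.Basis (Fin 6) k ↥(Subalgebra.center k (QuiverAlg k)),
      ∀ m, (b m : QuiverAlg k) =
        ![1, qγ k, qγ k ^ 2, qδ k, qδ k ^ 2, qβ k * qα k] m) ∧
    Module.finrank k ↥(Subalgebra.center k (QuiverAlg k)) = 6 := by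
  obtain ⟨b, hb⟩ := QuiverAlg.exists_basis_center k
  exact ⟨⟨b, hb⟩, by rw [Module.finrank_eq_card_basis b, Fintype.card_fin]⟩
end

section
/- Let k have characteristic 3. The quotient Z(A)/Z^pr(A) of the center of A by the span of αβ − βα is isomorphic as a k-algebra to k[x,y]/(x³ − y², xy, y³), via the map sending x to the image of γ and y to the image of δ. -/
/-! The 9-dimensional algebra `A` given by the quiver with vertices `i, j`, arrows
`α : i → j`, `β : j → i`, and loops `γ, δ` at `i`, with relations
`δ² = γ³ = αβ`, `δγ = γδ = 0`, `δα = γα = 0`, `βδ = βγ = 0`.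
Paths compose left-to-right, so the product `x * y` means "first `x`, then `y`";
in particular `α * β` is a loop at `i` and `β * α` is a loop at `j`.
We realise `A` as the quotient of the free algebra on the six generators
`e_i, e_j, α, β, γ, δ` by the path-algebra relations together with the quiver relations. -/

open FreeAlgebra

variable (k : Type*) [Field k]

/-- The centre `Z(A)` of the quiver algebra. -/
noncomputable abbrev QCenter := Subalgebra.center k (QuiverAlg k)

/-!
Relations in `A` show that the nine paths `i, j, α, β, βα, γ, γ², δ, δ²` span `A`, and their
left multiplication matrices show that they are linearly independent. Commuting with `α` and `β`
then forces a central element to be `a·1 + b·βα + g·γ + g'·γ² + d·δ + d'·δ²`; in particular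
`Z(A)·(αβ − βα) = k·(αβ − βα)`.

Since `γ³ = δ²`, `γδ = 0` and `δ³ = 0`, evaluation at `(γ, δ)` factors through
`k[x,y]/(x³ − y², xy, y³)`, in which every class is `a + g x + g' x² + d y + d' y²`. As
`αβ − βα = δ² − βα`, every central element is such an evaluation modulo `Z^pr(A)`, and such an
evaluation lies in `k·(αβ − βα)` only if it vanishes. So evaluation induces an isomorphism onto
`Z(A)/Z^pr(A)`, and the required map is its inverse composed with the quotient map.
-/

section MulLemmas

variable {R : Type*} [SemigroupWithZero R] {a b c : R}

theorem mul_eq_zero_of_mul_eq_self {e f : R} (ha : a * e = a) (hef : e * f = 0) (hb : f * b = b) :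
    a * b = 0 := by
  rw [← ha, ← hb, mul_assoc, ← mul_assoc e, hef, zero_mul, mul_zero]

theorem mul_mul_eq_of_mul_eq (h : a * b = c) (x : R) : a * (b * x) = c * x := by
  rw [← mul_assoc, h]

/- Conditional forms of `mul_mul_eq_of_mul_eq` in which `c` is determined by the left-hand side:
`simp` uses them on right-associated products, discharging `a * b = 0` or `a * b = b` itself. -/

theorem mul_mul_eq_zero_of_mul_eq_zero (h : a * b = 0) (x : R) : a * (b * x) = 0 := by
  rw [mul_mul_eq_of_mul_eq h, zero_mul]

theorem mul_mul_eq_mul_of_mul_eq_right (h : a * b = b) (x : R) : a * (b * x) = b * x :=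
  mul_mul_eq_of_mul_eq h x

end MulLemmas

theorem AlgHom.exists_leftInverse_ker_eq {R S T : Type*} [CommRing R] [CommRing S] [CommRing T]
    [Algebra R S] [Algebra R T] (f : S →ₐ[R] T) (J : Ideal T)
    (hsurj : ∀ t, ∃ s, t - f s ∈ J) (hinj : ∀ s, f s ∈ J → s = 0) :
    ∃ φ : T →ₐ[R] S,
      Function.Surjective φ ∧ RingHom.ker φ = J ∧ ∀ s, φ (f s) = s := by
  set g := (Ideal.Quotient.mkₐ R J).comp f
  have hg : Function.Bijective g := by
    refine ⟨(injective_iff_map_eq_zero g).mpr fun s hs => hinj s ?_, fun t => ?_⟩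
    · exact Ideal.Quotient.eq_zero_iff_mem.mp hs
    · obtain ⟨t, rfl⟩ := Ideal.Quotient.mk_surjective t
      obtain ⟨s, hs⟩ := hsurj t
      exact ⟨s, (Ideal.Quotient.eq.mpr hs).symm⟩
  set e := AlgEquiv.ofBijective g hg
  refine ⟨e.symm.toAlgHom.comp (Ideal.Quotient.mkₐ R J),
    e.symm.surjective.comp Ideal.Quotient.mk_surjective, ?_, fun s => e.symm_apply_eq.mpr rfl⟩
  ext t
  simp [RingHom.mem_ker, Ideal.Quotient.eq_zero_iff_mem]

section Relations

variable {k}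

theorem mkAlgHom_mul_of_rel {a b c : FreeAlgebra k (Fin 6)} (h : QuiverRel k (a * b) c) :
    RingQuot.mkAlgHom k (QuiverRel k) a * RingQuot.mkAlgHom k (QuiverRel k) b =
      RingQuot.mkAlgHom k (QuiverRel k) c := by
  rw [← map_mul]; exact RingQuot.mkAlgHom_rel k h

theorem mkAlgHom_mul_eq_zero_of_rel {a b : FreeAlgebra k (Fin 6)} (h : QuiverRel k (a * b) 0) :
    RingQuot.mkAlgHom k (QuiverRel k) a * RingQuot.mkAlgHom k (QuiverRel k) b = 0 := by
  rw [mkAlgHom_mul_of_rel h, map_zero]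

variable (k)

@[simp] theorem qi_mul_qi : qi k * qi k = qi k := mkAlgHom_mul_of_rel .idem_i
@[simp] theorem qj_mul_qj : qj k * qj k = qj k := mkAlgHom_mul_of_rel .idem_j
@[simp] theorem qi_mul_qj : qi k * qj k = 0 := mkAlgHom_mul_eq_zero_of_rel .orth_ij
@[simp] theorem qj_mul_qi : qj k * qi k = 0 := mkAlgHom_mul_eq_zero_of_rel .orth_ji
theorem qi_add_qj : qi k + qj k = 1 := by
  rw [qi, qj, ← map_add, RingQuot.mkAlgHom_rel k .sum_idem, map_one]
@[simp] theorem qi_mul_qα : qi k * qα k = qα k := mkAlgHom_mul_of_rel .alpha_src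
@[simp] theorem qα_mul_qj : qα k * qj k = qα k := mkAlgHom_mul_of_rel .alpha_tgt
@[simp] theorem qj_mul_qβ : qj k * qβ k = qβ k := mkAlgHom_mul_of_rel .beta_src
@[simp] theorem qβ_mul_qi : qβ k * qi k = qβ k := mkAlgHom_mul_of_rel .beta_tgt
@[simp] theorem qi_mul_qγ : qi k * qγ k = qγ k := mkAlgHom_mul_of_rel .gamma_src
@[simp] theorem qγ_mul_qi : qγ k * qi k = qγ k := mkAlgHom_mul_of_rel .gamma_tgt
@[simp] theorem qi_mul_qδ : qi k * qδ k = qδ k := mkAlgHom_mul_of_rel .delta_src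
@[simp] theorem qδ_mul_qi : qδ k * qi k = qδ k := mkAlgHom_mul_of_rel .delta_tgt
@[simp] theorem qα_mul_qβ : qα k * qβ k = qδ k * qδ k := by
  rw [qα, qβ, ← map_mul, ← RingQuot.mkAlgHom_rel k .delta_sq, map_mul]; rfl
@[simp] theorem qδ_mul_qγ : qδ k * qγ k = 0 := mkAlgHom_mul_eq_zero_of_rel .delta_gamma
@[simp] theorem qγ_mul_qδ : qγ k * qδ k = 0 := mkAlgHom_mul_eq_zero_of_rel .gamma_delta
@[simp] theorem qδ_mul_qα : qδ k * qα k = 0 := mkAlgHom_mul_eq_zero_of_rel .delta_alpha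
@[simp] theorem qγ_mul_qα : qγ k * qα k = 0 := mkAlgHom_mul_eq_zero_of_rel .gamma_alpha
@[simp] theorem qβ_mul_qδ : qβ k * qδ k = 0 := mkAlgHom_mul_eq_zero_of_rel .beta_delta
@[simp] theorem qβ_mul_qγ : qβ k * qγ k = 0 := mkAlgHom_mul_eq_zero_of_rel .beta_gamma

@[simp] theorem qγ_mul_qγ_mul_qγ : qγ k * (qγ k * qγ k) = qδ k * qδ k := by
  rw [qγ, ← map_mul, ← map_mul, RingQuot.mkAlgHom_rel k .gamma_cube,
    ← RingQuot.mkAlgHom_rel k .delta_sq, map_mul]; rfl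

@[simp] theorem qα_mul_qi : qα k * qi k = 0 :=
  mul_eq_zero_of_mul_eq_self (qα_mul_qj k) (qj_mul_qi k) (qi_mul_qi k)
@[simp] theorem qj_mul_qα : qj k * qα k = 0 :=
  mul_eq_zero_of_mul_eq_self (qj_mul_qj k) (qj_mul_qi k) (qi_mul_qα k)
@[simp] theorem qβ_mul_qj : qβ k * qj k = 0 :=
  mul_eq_zero_of_mul_eq_self (qβ_mul_qi k) (qi_mul_qj k) (qj_mul_qj k)
@[simp] theorem qi_mul_qβ : qi k * qβ k = 0 :=
  mul_eq_zero_of_mul_eq_self (qi_mul_qi k) (qi_mul_qj k) (qj_mul_qβ k)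
@[simp] theorem qγ_mul_qj : qγ k * qj k = 0 :=
  mul_eq_zero_of_mul_eq_self (qγ_mul_qi k) (qi_mul_qj k) (qj_mul_qj k)
@[simp] theorem qj_mul_qγ : qj k * qγ k = 0 :=
  mul_eq_zero_of_mul_eq_self (qj_mul_qj k) (qj_mul_qi k) (qi_mul_qγ k)
@[simp] theorem qδ_mul_qj : qδ k * qj k = 0 :=
  mul_eq_zero_of_mul_eq_self (qδ_mul_qi k) (qi_mul_qj k) (qj_mul_qj k)
@[simp] theorem qj_mul_qδ : qj k * qδ k = 0 :=
  mul_eq_zero_of_mul_eq_self (qj_mul_qj k) (qj_mul_qi k) (qi_mul_qδ k)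
@[simp] theorem qα_mul_qα : qα k * qα k = 0 :=
  mul_eq_zero_of_mul_eq_self (qα_mul_qj k) (qj_mul_qi k) (qi_mul_qα k)
@[simp] theorem qα_mul_qγ : qα k * qγ k = 0 :=
  mul_eq_zero_of_mul_eq_self (qα_mul_qj k) (qj_mul_qi k) (qi_mul_qγ k)
@[simp] theorem qα_mul_qδ : qα k * qδ k = 0 :=
  mul_eq_zero_of_mul_eq_self (qα_mul_qj k) (qj_mul_qi k) (qi_mul_qδ k)
@[simp] theorem qβ_mul_qβ : qβ k * qβ k = 0 :=
  mul_eq_zero_of_mul_eq_self (qβ_mul_qi k) (qi_mul_qj k) (qj_mul_qβ k)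
@[simp] theorem qγ_mul_qβ : qγ k * qβ k = 0 :=
  mul_eq_zero_of_mul_eq_self (qγ_mul_qi k) (qi_mul_qj k) (qj_mul_qβ k)
@[simp] theorem qδ_mul_qβ : qδ k * qβ k = 0 :=
  mul_eq_zero_of_mul_eq_self (qδ_mul_qi k) (qi_mul_qj k) (qj_mul_qβ k)
@[simp] theorem qδ_mul_qδ_mul_qδ : qδ k * (qδ k * qδ k) = 0 := by
  rw [← qα_mul_qβ, ← mul_assoc, qδ_mul_qα, zero_mul]

@[simp] theorem qα_mul_qβ_mul (x : QuiverAlg k) : qα k * (qβ k * x) = qδ k * (qδ k * x) := by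
  rw [mul_mul_eq_of_mul_eq (qα_mul_qβ k), mul_assoc]
@[simp] theorem qγ_mul_qγ_mul_qγ_mul (x : QuiverAlg k) :
    qγ k * (qγ k * (qγ k * x)) = qδ k * (qδ k * x) := by
  simpa only [mul_assoc] using congrArg (· * x) (qγ_mul_qγ_mul_qγ k)
@[simp] theorem qδ_mul_qδ_mul_qδ_mul (x : QuiverAlg k) : qδ k * (qδ k * (qδ k * x)) = 0 := by
  simpa only [mul_assoc, zero_mul] using congrArg (· * x) (qδ_mul_qδ_mul_qδ k)

end Relations

section Representation

open Matrix

/-- Column `n` of `generatorMatrix g` lists the coordinates of `g * qbasisVec k n` in the basis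
`qbasisVec k`, the generators being numbered as in `QuiverRel`. -/
def generatorMatrix : Fin 6 → Matrix (Fin 9) (Fin 9) ℕ :=
  ![diagonal ![1, 0, 1, 0, 0, 1, 1, 1, 1], diagonal ![0, 1, 0, 1, 1, 0, 0, 0, 0],
    single 2 1 1 + single 8 3 1, single 3 0 1 + single 4 2 1,
    single 5 0 1 + single 6 5 1 + single 8 6 1, single 7 0 1 + single 8 7 1]

theorem generatorMatrix_relations :
    generatorMatrix 0 * generatorMatrix 0 = generatorMatrix 0 ∧
    generatorMatrix 1 * generatorMatrix 1 = generatorMatrix 1 ∧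
    generatorMatrix 0 * generatorMatrix 1 = 0 ∧ generatorMatrix 1 * generatorMatrix 0 = 0 ∧
    generatorMatrix 0 + generatorMatrix 1 = 1 ∧
    generatorMatrix 0 * generatorMatrix 2 = generatorMatrix 2 ∧
    generatorMatrix 2 * generatorMatrix 1 = generatorMatrix 2 ∧
    generatorMatrix 1 * generatorMatrix 3 = generatorMatrix 3 ∧
    generatorMatrix 3 * generatorMatrix 0 = generatorMatrix 3 ∧
    generatorMatrix 0 * generatorMatrix 4 = generatorMatrix 4 ∧
    generatorMatrix 4 * generatorMatrix 0 = generatorMatrix 4 ∧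
    generatorMatrix 0 * generatorMatrix 5 = generatorMatrix 5 ∧
    generatorMatrix 5 * generatorMatrix 0 = generatorMatrix 5 ∧
    generatorMatrix 5 * generatorMatrix 5 = generatorMatrix 2 * generatorMatrix 3 ∧
    generatorMatrix 4 * (generatorMatrix 4 * generatorMatrix 4) =
      generatorMatrix 2 * generatorMatrix 3 ∧
    generatorMatrix 5 * generatorMatrix 4 = 0 ∧ generatorMatrix 4 * generatorMatrix 5 = 0 ∧
    generatorMatrix 5 * generatorMatrix 2 = 0 ∧ generatorMatrix 4 * generatorMatrix 2 = 0 ∧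
    generatorMatrix 3 * generatorMatrix 5 = 0 ∧ generatorMatrix 3 * generatorMatrix 4 = 0 := by
  decide

noncomputable def freeAlgebraRep : FreeAlgebra k (Fin 6) →ₐ[k] Matrix (Fin 9) (Fin 9) k :=
  FreeAlgebra.lift k fun g => (Nat.castRingHom k).mapMatrix (generatorMatrix g)

theorem freeAlgebraRep_eq_of_rel ⦃x y : FreeAlgebra k (Fin 6)⦄ (h : QuiverRel k x y) :
    freeAlgebraRep k x = freeAlgebraRep k y := by
  have := generatorMatrix_relations
  cases h <;>
    simp only [freeAlgebraRep, map_mul, map_add, FreeAlgebra.lift_ι_apply] <;>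
    simp only [← map_mul, ← map_add, this, map_zero, map_one]

noncomputable def leftRegularRep : QuiverAlg k →ₐ[k] Matrix (Fin 9) (Fin 9) k :=
  RingQuot.liftAlgHom k ⟨freeAlgebraRep k, freeAlgebraRep_eq_of_rel k⟩

def basisMatrix : Fin 9 → Matrix (Fin 9) (Fin 9) ℕ :=
  ![generatorMatrix 0, generatorMatrix 1, generatorMatrix 2, generatorMatrix 3,
    generatorMatrix 3 * generatorMatrix 2, generatorMatrix 4, generatorMatrix 4 ^ 2,
    generatorMatrix 5, generatorMatrix 5 ^ 2]

theorem basisMatrix_apply_zero_add_apply_one (n m : Fin 9) :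
    basisMatrix n m 0 + basisMatrix n m 1 = if m = n then 1 else 0 := by
  revert n m; decide

theorem leftRegularRep_qbasisVec (n : Fin 9) :
    leftRegularRep k (qbasisVec k n) = (Nat.castRingHom k).mapMatrix (basisMatrix n) := by
  fin_cases n <;>
    simp [qbasisVec, basisMatrix, leftRegularRep, qi, qj, qα, qβ, qγ, qδ, freeAlgebraRep,
      -RingHom.mapMatrix_apply]

end Representation

/-- Since `x = x * qi + x * qj`, the coordinates of `x` are the sum of the first two columns of
its left multiplication matrix. -/
noncomputable def basisCoord : QuiverAlg k →ₗ[k] Fin 9 → k where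
  toFun x m := leftRegularRep k x m 0 + leftRegularRep k x m 1
  map_add' x y := by ext m; simp only [map_add, Matrix.add_apply, Pi.add_apply]; ring
  map_smul' c x := by
    ext m
    simp only [map_smul, Matrix.smul_apply, smul_eq_mul, Pi.smul_apply, RingHom.id_apply]
    ring

theorem basisCoord_qbasisVec (n : Fin 9) : basisCoord k (qbasisVec k n) = Pi.single n 1 := by
  ext m
  simp only [basisCoord, LinearMap.coe_mk, AddHom.coe_mk, leftRegularRep_qbasisVec,
    RingHom.mapMatrix_apply, Matrix.map_apply, ← map_add, basisMatrix_apply_zero_add_apply_one,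
    Pi.single_apply]
  split_ifs <;> simp

theorem linearIndependent_qbasisVec : LinearIndependent k (qbasisVec k) := by
  refine LinearIndependent.of_comp (basisCoord k) ?_
  simpa only [Function.comp_def, basisCoord_qbasisVec] using
    Pi.linearIndependent_single_one (Fin 9) k

theorem qbasisVec_mul_qbasisVec_mem (m n : Fin 9) :
    qbasisVec k m * qbasisVec k n ∈ Submodule.span k (Set.range (qbasisVec k)) := by
  set S := Submodule.span k (Set.range (qbasisVec k))
  have hS : ∀ n, qbasisVec k n ∈ S := fun n => Submodule.subset_span ⟨n, rfl⟩
  simp only [Fin.forall_fin_succ, IsEmpty.forall_iff, qbasisVec, Matrix.cons_val_zero,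
    Matrix.cons_val_succ, sq] at hS
  fin_cases m <;> fin_cases n <;>
    simp [qbasisVec, sq, mul_assoc, mul_mul_eq_zero_of_mul_eq_zero, mul_mul_eq_mul_of_mul_eq_right,
      hS]

theorem span_range_qbasisVec : Submodule.span k (Set.range (qbasisVec k)) = ⊤ := by
  set S := Submodule.span k (Set.range (qbasisVec k))
  have mem (n : Fin 9) : qbasisVec k n ∈ S := Submodule.subset_span ⟨n, rfl⟩
  have mul_mem {x y : QuiverAlg k} (hx : x ∈ S) (hy : y ∈ S) : x * y ∈ S := by
    have hxy := Submodule.mul_mem_mul hx hy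
    rw [Submodule.span_mul_span] at hxy
    refine Submodule.span_le.mpr ?_ hxy
    rintro _ ⟨_, ⟨m, rfl⟩, _, ⟨n, rfl⟩, rfl⟩
    exact qbasisVec_mul_qbasisVec_mem k m n
  have one_mem : (1 : QuiverAlg k) ∈ S := qi_add_qj k ▸ add_mem (mem 0) (mem 1)
  rw [eq_top_iff]
  rintro x -
  obtain ⟨x, rfl⟩ := RingQuot.mkAlgHom_surjective k (QuiverRel k) x
  induction x using FreeAlgebra.induction with
  | grade0 r => rw [AlgHom.commutes, Algebra.algebraMap_eq_smul_one]; exact S.smul_mem r one_mem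
  | grade1 g => fin_cases g; exacts [mem 0, mem 1, mem 2, mem 3, mem 5, mem 7]
  | mul a b ha hb => rw [map_mul]; exact mul_mem ha hb
  | add a b ha hb => rw [map_add]; exact add_mem ha hb

theorem sum_smul_qbasisVec (c : Fin 9 → k) :
    ∑ n, c n • qbasisVec k n = c 0 • qi k + c 1 • qj k + c 2 • qα k + c 3 • qβ k +
      c 4 • (qβ k * qα k) + c 5 • qγ k + c 6 • qγ k ^ 2 + c 7 • qδ k + c 8 • qδ k ^ 2 := by
  rw [Fin.sum_univ_succ, Fin.sum_univ_eight]
  simp only [add_assoc]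
  rfl

theorem exists_eq_of_mem_center {z : QuiverAlg k} (hz : z ∈ QCenter k) :
    ∃ a b g g' d d' : k, z = a • 1 + b • (qβ k * qα k) + g • qγ k + g' • qγ k ^ 2 +
      d • qδ k + d' • qδ k ^ 2 := by
  obtain ⟨c, rfl⟩ := (Submodule.mem_span_range_iff_exists_fun k).mp
    (span_range_qbasisVec k ▸ Submodule.mem_top (x := z))
  have hα := Subalgebra.mem_center_iff.mp hz (qα k)
  have hβ := Subalgebra.mem_center_iff.mp hz (qβ k)
  simp [sum_smul_qbasisVec, add_mul, mul_add, sq, mul_assoc, mul_mul_eq_zero_of_mul_eq_zero]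
    at hα hβ
  have hα' := Fintype.linearIndependent_iff.mp (linearIndependent_qbasisVec k)
    ![0, 0, c 1 - c 0, 0, -c 3, 0, 0, 0, c 3]
    (by rw [sum_smul_qbasisVec]; simp only [Matrix.cons_val, sq]
        linear_combination (norm := module) hα)
  have hβ' := Fintype.linearIndependent_iff.mp (linearIndependent_qbasisVec k)
    ![0, 0, 0, c 0 - c 1, c 2, 0, 0, 0, -c 2]
    (by rw [sum_smul_qbasisVec]; simp only [Matrix.cons_val, sq]
        linear_combination (norm := module) hβ)
  have h10 : c 1 = c 0 := sub_eq_zero.mp (hα' 2)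
  have h3 : c 3 = 0 := hα' 8
  have h2 : c 2 = 0 := hβ' 4
  refine ⟨c 0, c 4, c 5, c 6, c 7, c 8, ?_⟩
  rw [sum_smul_qbasisVec, h10, h2, h3, ← qi_add_qj]
  module

theorem exists_mul_commutator_eq_smul {c : QuiverAlg k} (hc : c ∈ QCenter k) :
    ∃ a : k, c * (qα k * qβ k - qβ k * qα k) = a • (qα k * qβ k - qβ k * qα k) := by
  obtain ⟨a, b, g, g', d, d', rfl⟩ := exists_eq_of_mem_center k hc
  refine ⟨a, ?_⟩
  simp [add_mul, mul_sub, smul_sub, sq, mul_assoc, mul_mul_eq_zero_of_mul_eq_zero]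

section Quotient

open MvPolynomial

noncomputable abbrev relIdeal : Ideal (MvPolynomial (Fin 2) k) :=
  Ideal.span {X 0 ^ 3 - X 1 ^ 2, X 0 * X 1, X 1 ^ 3}

theorem exists_sub_mem_relIdeal (p : MvPolynomial (Fin 2) k) :
    ∃ a g g' d d' : k,
      p - (C a + C g * X 0 + C g' * X 0 ^ 2 + C d * X 1 + C d' * X 1 ^ 2) ∈ relIdeal k := by
  have hx3 : (X 0 ^ 3 - X 1 ^ 2 : MvPolynomial (Fin 2) k) ∈ relIdeal k :=
    Ideal.subset_span (by simp)
  have hxy : (X 0 * X 1 : MvPolynomial (Fin 2) k) ∈ relIdeal k := Ideal.subset_span (by simp)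
  have hy3 : (X 1 ^ 3 : MvPolynomial (Fin 2) k) ∈ relIdeal k := Ideal.subset_span (by simp)
  induction p using MvPolynomial.induction_on with
  | C r => exact ⟨r, 0, 0, 0, 0, by simp⟩
  | add p q hp hq =>
    obtain ⟨a, g, g', d, d', hp⟩ := hp
    obtain ⟨b, h, h', e, e', hq⟩ := hq
    refine ⟨a + b, g + h, g' + h', d + e, d' + e', ?_⟩
    convert add_mem hp hq using 1
    simp only [C_add]
    ring
  | mul_X p i hp =>
    obtain ⟨a, g, g', d, d', hp⟩ := hp
    fin_cases i
    · refine ⟨0, a, g, 0, g', ?_⟩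
      convert add_mem (add_mem (Ideal.mul_mem_right (X 0) _ hp) (Ideal.mul_mem_left _ (C g') hx3))
        (Ideal.mul_mem_left _ (C d + C d' * X 1) hxy) using 1
      simp only [Fin.zero_eta, C_0]
      ring
    · refine ⟨0, 0, 0, a, d, ?_⟩
      convert add_mem (add_mem (Ideal.mul_mem_right (X 1) _ hp)
        (Ideal.mul_mem_left _ (C g + C g' * X 0) hxy)) (Ideal.mul_mem_left _ (C d') hy3) using 1
      simp only [Fin.mk_one, C_0]
      ring

variable {k}
variable (hγ : qγ k ∈ QCenter k) (hδ : qδ k ∈ QCenter k)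

noncomputable def evalCenter : MvPolynomial (Fin 2) k →ₐ[k] QCenter k :=
  aeval ![⟨qγ k, hγ⟩, ⟨qδ k, hδ⟩]

theorem coe_evalCenter (a g g' d d' : k) :
    (evalCenter hγ hδ (C a + C g * X 0 + C g' * X 0 ^ 2 + C d * X 1 + C d' * X 1 ^ 2) :
      QuiverAlg k) = a • 1 + g • qγ k + g' • qγ k ^ 2 + d • qδ k + d' • qδ k ^ 2 := by
  simp [evalCenter, Algebra.smul_def]

theorem relIdeal_le_ker_evalCenter : relIdeal k ≤ RingHom.ker (evalCenter hγ hδ) := by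
  rw [Ideal.span_le]
  rintro p (rfl | rfl | rfl) <;>
    simp [evalCenter, Subtype.ext_iff, pow_succ, mul_assoc]

noncomputable def quotEvalCenter : (MvPolynomial (Fin 2) k ⧸ relIdeal k) →ₐ[k] QCenter k :=
  Ideal.Quotient.liftₐ _ (evalCenter hγ hδ) fun _ hp =>
    RingHom.mem_ker.mp (relIdeal_le_ker_evalCenter hγ hδ hp)

theorem quotEvalCenter_mk (p : MvPolynomial (Fin 2) k) :
    quotEvalCenter hγ hδ (Ideal.Quotient.mk _ p) = evalCenter hγ hδ p :=
  rfl

variable (hz : qα k * qβ k - qβ k * qα k ∈ QCenter k)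

/-- The ideal `Z^pr(A)` of the centre. -/
noncomputable abbrev projCenter : Ideal (QCenter k) :=
  Ideal.span {⟨qα k * qβ k - qβ k * qα k, hz⟩}

theorem exists_sub_quotEvalCenter_mem_projCenter (z : QCenter k) :
    ∃ q, z - quotEvalCenter hγ hδ q ∈ projCenter hz := by
  obtain ⟨z, hzc⟩ := z
  obtain ⟨a, b, g, g', d, d', rfl⟩ := exists_eq_of_mem_center k hzc
  refine ⟨Ideal.Quotient.mk _
    (C a + C g * X 0 + C g' * X 0 ^ 2 + C d * X 1 + C (d' + b) * X 1 ^ 2), ?_⟩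
  refine Ideal.mem_span_singleton'.mpr ⟨algebraMap k _ (-b), Subtype.ext ?_⟩
  rw [quotEvalCenter_mk, Subalgebra.coe_mul, Subalgebra.coe_algebraMap, AddSubgroupClass.coe_sub,
    coe_evalCenter, ← Algebra.smul_def]
  dsimp only
  rw [qα_mul_qβ, ← sq]
  module

theorem eq_zero_of_quotEvalCenter_mem_projCenter (q : MvPolynomial (Fin 2) k ⧸ relIdeal k)
    (hq : quotEvalCenter hγ hδ q ∈ projCenter hz) : q = 0 := by
  obtain ⟨p, rfl⟩ := Ideal.Quotient.mk_surjective q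
  obtain ⟨a, g, g', d, d', hp⟩ := exists_sub_mem_relIdeal k p
  rw [← Ideal.Quotient.eq] at hp
  rw [hp, quotEvalCenter_mk, Ideal.mem_span_singleton'] at hq
  obtain ⟨c, hc⟩ := hq
  obtain ⟨e, he⟩ := exists_mul_commutator_eq_smul k c.2
  have h := congrArg Subtype.val hc
  rw [Subalgebra.coe_mul, he, coe_evalCenter, qα_mul_qβ, ← qi_add_qj] at h
  have h0 := Fintype.linearIndependent_iff.mp (linearIndependent_qbasisVec k)
    ![a, a, 0, 0, e, g, g', d, d' - e]
    (by rw [sum_smul_qbasisVec]; simp only [Matrix.cons_val, sq] at h ⊢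
        linear_combination (norm := module) -h)
  have ha : a = 0 := h0 0
  have hg : g = 0 := h0 5
  have hg' : g' = 0 := h0 6
  have hd : d = 0 := h0 7
  have hd' : d' = 0 := by simpa [show e = 0 from h0 4] using h0 8
  simp [hp, ha, hg, hg', hd, hd']

end Quotient

open MvPolynomial in
theorem stmt_11
    (hγ : qγ k ∈ QCenter k) (hδ : qδ k ∈ QCenter k)
    (hz : qα k * qβ k - qβ k * qα k ∈ QCenter k) :
    ∃ φ : ↥(QCenter k) →ₐ[k] (MvPolynomial (Fin 2) k ⧸
        (Ideal.span {(X 0 : MvPolynomial (Fin 2) k) ^ 3 - X 1 ^ 2, X 0 * X 1, X 1 ^ 3} :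
          Ideal (MvPolynomial (Fin 2) k))),
      Function.Surjective φ ∧
      RingHom.ker φ = Ideal.span ({⟨qα k * qβ k - qβ k * qα k, hz⟩} : Set ↥(QCenter k)) ∧
      φ ⟨qγ k, hγ⟩ = Ideal.Quotient.mk _ (X 0) ∧
      φ ⟨qδ k, hδ⟩ = Ideal.Quotient.mk _ (X 1) := by
  -- Naming `T` lets instance search, not unification, supply the ring structure of the centre.
  obtain ⟨φ, hφ, hker, hφe⟩ :=
    AlgHom.exists_leftInverse_ker_eq (T := ↥(QCenter k)) (quotEvalCenter hγ hδ) _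
      (exists_sub_quotEvalCenter_mem_projCenter hγ hδ hz)
      (eq_zero_of_quotEvalCenter_mem_projCenter hγ hδ hz)
  refine ⟨φ, hφ, hker, ?_, ?_⟩
  · simpa only [quotEvalCenter_mk, evalCenter, aeval_X, Matrix.cons_val_zero] using
      hφe (Ideal.Quotient.mk _ (X 0))
  · simpa only [quotEvalCenter_mk, evalCenter, aeval_X, Matrix.cons_val_one,
      Matrix.cons_val_zero] using hφe (Ideal.Quotient.mk _ (X 1))
end
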